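/- For p ∈ V write φ_{K,p} for the function u ↦ ν(p−u) − ν(p), and for a dual face L ⊆ K and p ∈ V write φ_{L,p} for the function u ↦ ν_L(p−u) − ν_L(p). Then: (a) φ_{K,p} = φ_{K,p'} if and only if p = p'; (b) for dual faces L, L' and p, p' ∈ V, φ_{L,p} = φ_{L',p'} if and only if L = L' and p − p' ∈ H_L; and (c) φ_{K,p} ≠ φ_{L,p'} for every dual face L and all p, p' ∈ V. -/

import Mathlib

open Bornology

/-- The polyhedral asymmetric norm `ν(u) = max {ξ_k(u) : k ∈ K}`. -/
noncomputable def nu {V : Type*} [AddCommGroup V] [Module ℝ V] {m : ℕ}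
    (ξ : Fin (m + 1) → V →ₗ[ℝ] ℝ) (u : V) : ℝ :=
  Finset.univ.sup' Finset.univ_nonempty fun k => ξ k u

/-- `ν_L(u) = max {ξ_ℓ(u) : ℓ ∈ L}` (junk value `0` for `L = ∅`). -/
noncomputable def nuL {V : Type*} [AddCommGroup V] [Module ℝ V] {m : ℕ}
    (ξ : Fin (m + 1) → V →ₗ[ℝ] ℝ) (L : Finset (Fin (m + 1))) (u : V) : ℝ :=
  if h : L.Nonempty then L.sup' h fun ℓ => ξ ℓ u else 0

/-- `L ⊆ K` is a dual face if there is `v` with `ν(v) = 1` and `L = {k : ξ_k(v) = 1}`. -/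
def IsDualFace {V : Type*} [AddCommGroup V] [Module ℝ V] {m : ℕ}
    (ξ : Fin (m + 1) → V →ₗ[ℝ] ℝ) (L : Finset (Fin (m + 1))) : Prop :=
  ∃ v : V, nu ξ v = 1 ∧ ∀ k, k ∈ L ↔ ξ k v = 1

/-- `H_L = {u : ξ_k(u) = ξ_ℓ(u) for all k, ℓ ∈ L}`. -/
def HL {V : Type*} [AddCommGroup V] [Module ℝ V] {m : ℕ}
    (ξ : Fin (m + 1) → V →ₗ[ℝ] ℝ) (L : Finset (Fin (m + 1))) : Set V :=
  {u : V | ∀ k ∈ L, ∀ l ∈ L, ξ k u = ξ l u}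

/-!
Equality `φ_{L,p} = φ_{L',p'}` says `ν_L(w) = ν_{L'}(q + w) + c` for all `w`, with `q = p' - p`
and a constant `c`. Scaling `w` to infinity removes `q` and `c`, so `ν_L = ν_{L'}`, and evaluating
at the facet vectors `u_k` (where `ξ_k` is the unique maximal functional) gives `L = L'`.
Evaluating the equation and its inverse at `u_k`, `k ∈ L`, then gives `ξ_k(q) = -c`, i.e. `q ∈ H_L`. For
`L = K` the equation at `w = 0` and `w = -q` gives `ν(q) + ν(-q) = 0`, so `q = 0`; and `K`
itself is not a dual face, since `ξ_k(v) = 1` for all `k` would give `ν(-v) = -1`.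
-/

lemma nonpos_of_forall_pos_mul_le {a b : ℝ} (h : ∀ t : ℝ, 0 < t → t * a ≤ b) : a ≤ 0 := by
  by_contra! ha
  have := h ((|b| + 1) / a) (by positivity)
  rw [div_mul_cancel₀ _ ha.ne'] at this
  linarith [le_abs_self b]

section NuL

variable {V : Type*} [AddCommGroup V] [Module ℝ V] {m : ℕ} (ξ : Fin (m + 1) → V →ₗ[ℝ] ℝ)
  {L L' : Finset (Fin (m + 1))}

lemma nuL_of_nonempty (hL : L.Nonempty) (u : V) : nuL ξ L u = L.sup' hL fun ℓ => ξ ℓ u :=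
  dif_pos hL

lemma nu_eq_nuL_univ : nu ξ = nuL ξ Finset.univ :=
  funext fun u => (nuL_of_nonempty ξ Finset.univ_nonempty u).symm

lemma le_nuL {k : Fin (m + 1)} (hk : k ∈ L) (u : V) : ξ k u ≤ nuL ξ L u := by
  rw [nuL_of_nonempty ξ ⟨k, hk⟩]
  exact Finset.le_sup' (fun ℓ => ξ ℓ u) hk

lemma nuL_le (hL : L.Nonempty) {u : V} {a : ℝ} (h : ∀ l ∈ L, ξ l u ≤ a) : nuL ξ L u ≤ a := by
  rw [nuL_of_nonempty ξ hL]
  exact Finset.sup'_le _ _ h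

lemma nuL_smul_of_nonneg (hL : L.Nonempty) {t : ℝ} (ht : 0 ≤ t) (u : V) :
    nuL ξ L (t • u) = t * nuL ξ L u := by
  simp only [nuL_of_nonempty ξ hL, map_smul, smul_eq_mul, Finset.mul₀_sup' ht]

lemma nuL_zero (hL : L.Nonempty) : nuL ξ L (0 : V) = 0 := by
  simpa using nuL_smul_of_nonneg ξ hL le_rfl (0 : V)

lemma nuL_add_le (hL : L.Nonempty) (u w : V) : nuL ξ L (u + w) ≤ nuL ξ L u + nuL ξ L w :=
  nuL_le ξ hL fun l hl => by
    rw [map_add]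
    exact add_le_add (le_nuL ξ hl u) (le_nuL ξ hl w)

lemma nuL_add_of_mem_HL {q : V} (hq : q ∈ HL ξ L) {k : Fin (m + 1)} (hk : k ∈ L) (w : V) :
    nuL ξ L (q + w) = ξ k q + nuL ξ L w := by
  have hL : L.Nonempty := ⟨k, hk⟩
  simp only [nuL_of_nonempty ξ hL, map_add, Finset.add_sup']
  exact Finset.sup'_congr _ rfl fun l hl => by rw [hq l hl k hk]

lemma nuL_sub_sub_eq_of_sub_mem_HL (hL : L.Nonempty) {p p' : V} (hp : p - p' ∈ HL ξ L) (u : V) :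
    nuL ξ L (p - u) - nuL ξ L p = nuL ξ L (p' - u) - nuL ξ L p' := by
  obtain ⟨k, hk⟩ := hL
  have hpu := nuL_add_of_mem_HL ξ hp hk (p' - u)
  have hp' := nuL_add_of_mem_HL ξ hp hk p'
  rw [sub_add_sub_cancel] at hpu
  rw [sub_add_cancel] at hp'
  rw [hpu, hp']
  ring

lemma forall_nuL_eq_add_of_eq {p p' : V}
    (h : (fun u => nuL ξ L (p - u) - nuL ξ L p) = fun u => nuL ξ L' (p' - u) - nuL ξ L' p') :
    ∀ w, nuL ξ L w = nuL ξ L' ((p' - p) + w) + (nuL ξ L p - nuL ξ L' p') := by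
  intro w
  have hw := congrFun h (p - w)
  rw [sub_sub_cancel, ← sub_add] at hw
  linarith

lemma forall_nuL_eq_add_symm {q : V} {c : ℝ} (h : ∀ w, nuL ξ L w = nuL ξ L' (q + w) + c) :
    ∀ w, nuL ξ L' w = nuL ξ L (-q + w) + -c := by
  intro w
  have hw := h (-q + w)
  rw [add_neg_cancel_left] at hw
  linarith

lemma nuL_le_of_forall_eq_add (hL : L.Nonempty) (hL' : L'.Nonempty) {q : V} {c : ℝ}
    (h : ∀ w, nuL ξ L w = nuL ξ L' (q + w) + c) (u : V) : nuL ξ L u ≤ nuL ξ L' u := by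
  suffices ∀ t : ℝ, 0 < t → t * (nuL ξ L u - nuL ξ L' u) ≤ nuL ξ L' q + c by
    linarith [nonpos_of_forall_pos_mul_le this]
  intro t ht
  have hscaled := h (t • u)
  rw [nuL_smul_of_nonneg ξ hL ht.le] at hscaled
  have hsub := nuL_add_le ξ hL' q (t • u)
  rw [nuL_smul_of_nonneg ξ hL' ht.le] at hsub
  linarith

variable {ξ}

lemma subset_of_forall_nuL_le (hfacet : ∀ k, ∃ u : V, ξ k u = 1 ∧ ∀ l, l ≠ k → ξ l u < 1)
    (hL' : L'.Nonempty) (h : ∀ u, nuL ξ L u ≤ nuL ξ L' u) : L ⊆ L' := by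
  intro k hk
  by_contra hk'
  obtain ⟨u, hku, hlu⟩ := hfacet k
  have hlt : nuL ξ L' u < 1 := by
    rw [nuL_of_nonempty ξ hL', Finset.sup'_lt_iff]
    exact fun l hl => hlu l (ne_of_mem_of_not_mem hl hk')
  linarith [le_nuL ξ hk u, h u]

lemma eq_of_forall_nuL_eq_add (hfacet : ∀ k, ∃ u : V, ξ k u = 1 ∧ ∀ l, l ≠ k → ξ l u < 1)
    (hL : L.Nonempty) (hL' : L'.Nonempty) {q : V} {c : ℝ}
    (h : ∀ w, nuL ξ L w = nuL ξ L' (q + w) + c) : L = L' :=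
  (subset_of_forall_nuL_le hfacet hL' (nuL_le_of_forall_eq_add ξ hL hL' h)).antisymm
    (subset_of_forall_nuL_le hfacet hL
      (nuL_le_of_forall_eq_add ξ hL' hL (forall_nuL_eq_add_symm ξ h)))

lemma map_le_of_forall_nuL_eq_add (hfacet : ∀ k, ∃ u : V, ξ k u = 1 ∧ ∀ l, l ≠ k → ξ l u < 1)
    {q : V} {c : ℝ} (h : ∀ w, nuL ξ L w = nuL ξ L (q + w) + c) {k : Fin (m + 1)} (hk : k ∈ L) :
    ξ k q ≤ -c := by
  obtain ⟨u, hku, hlu⟩ := hfacet k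
  have hmax : nuL ξ L u ≤ ξ k u := nuL_le ξ ⟨k, hk⟩ fun l _ => by
    rcases eq_or_ne l k with rfl | hlk
    · rfl
    · exact (hlu l hlk).le.trans hku.ge
  have hqu := le_nuL ξ hk (q + u)
  rw [map_add] at hqu
  linarith [h u]

lemma mem_HL_of_forall_nuL_eq_add (hfacet : ∀ k, ∃ u : V, ξ k u = 1 ∧ ∀ l, l ≠ k → ξ l u < 1)
    {q : V} {c : ℝ} (h : ∀ w, nuL ξ L w = nuL ξ L (q + w) + c) : q ∈ HL ξ L := by
  have hval : ∀ k ∈ L, ξ k q = -c := fun k hk => by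
    have hneg := map_le_of_forall_nuL_eq_add hfacet (forall_nuL_eq_add_symm ξ h) hk
    rw [map_neg] at hneg
    linarith [map_le_of_forall_nuL_eq_add hfacet h hk]
  exact fun k hk l hl => (hval k hk).trans (hval l hl).symm

lemma eq_zero_of_forall_nu_eq_add (hpos : ∀ u : V, u ≠ 0 → 0 < nu ξ u) {q : V} {c : ℝ}
    (h : ∀ w, nuL ξ Finset.univ w = nuL ξ Finset.univ (q + w) + c) : q = 0 := by
  by_contra hq
  have h0 := h 0
  have hneg := h (-q)
  rw [add_zero, nuL_zero ξ Finset.univ_nonempty] at h0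
  rw [add_neg_cancel, nuL_zero ξ Finset.univ_nonempty] at hneg
  have hq₁ := hpos q hq
  have hq₂ := hpos (-q) (neg_ne_zero.mpr hq)
  rw [nu_eq_nuL_univ] at hq₁ hq₂
  linarith

lemma IsDualFace.nonempty (hL : IsDualFace ξ L) : L.Nonempty := by
  obtain ⟨v, hv, hLv⟩ := hL
  obtain ⟨k, -, hk⟩ := Finset.exists_mem_eq_sup' Finset.univ_nonempty fun k => ξ k v
  exact ⟨k, (hLv k).mpr (hk ▸ hv)⟩

lemma not_isDualFace_univ (hpos : ∀ u : V, u ≠ 0 → 0 < nu ξ u) : ¬ IsDualFace ξ Finset.univ := by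
  rintro ⟨v, hv, hLv⟩
  have hv0 : v ≠ 0 := by
    rintro rfl
    rw [nu_eq_nuL_univ, nuL_zero ξ Finset.univ_nonempty] at hv
    exact zero_ne_one hv
  have hneg : nu ξ (-v) ≤ -1 := by
    rw [nu_eq_nuL_univ]
    exact nuL_le ξ Finset.univ_nonempty fun k _ => by
      rw [map_neg, (hLv k).mp (Finset.mem_univ k)]
  linarith [hpos (-v) (neg_ne_zero.mpr hv0)]

end NuL

theorem horofunction_parametrization_injective_general
    {V : Type*} [NormedAddCommGroup V] [InnerProductSpace ℝ V]
    {m : ℕ} (ξ : Fin (m + 1) → V →ₗ[ℝ] ℝ)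
    (hfacet : ∀ k, ∃ u : V, ξ k u = 1 ∧ ∀ l, l ≠ k → ξ l u < 1)
    (hpos : ∀ u : V, u ≠ 0 → 0 < nu ξ u) :
    (∀ p p' : V,
      ((fun u => nu ξ (p - u) - nu ξ p) = fun u => nu ξ (p' - u) - nu ξ p') ↔ p = p') ∧
    (∀ L L' : Finset (Fin (m + 1)), IsDualFace ξ L → IsDualFace ξ L' → ∀ p p' : V,
      ((fun u => nuL ξ L (p - u) - nuL ξ L p) =
          fun u => nuL ξ L' (p' - u) - nuL ξ L' p') ↔
        (L = L' ∧ p - p' ∈ HL ξ L)) ∧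
    (∀ L : Finset (Fin (m + 1)), IsDualFace ξ L → ∀ p p' : V,
      (fun u => nu ξ (p - u) - nu ξ p) ≠ fun u => nuL ξ L (p' - u) - nuL ξ L p') := by
  simp only [nu_eq_nuL_univ]
  refine ⟨fun p p' => ⟨fun h => ?_, fun h => h ▸ rfl⟩,
    fun L L' hL hL' p p' => ⟨fun h => ?_, ?_⟩, fun L hL p p' h => ?_⟩
  · exact (sub_eq_zero.mp (eq_zero_of_forall_nu_eq_add hpos (forall_nuL_eq_add_of_eq ξ h))).symm
  · have hshift := forall_nuL_eq_add_of_eq ξ h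
    obtain rfl := eq_of_forall_nuL_eq_add hfacet hL.nonempty hL'.nonempty hshift
    have hmem := mem_HL_of_forall_nuL_eq_add hfacet (forall_nuL_eq_add_symm ξ hshift)
    exact ⟨rfl, by rwa [neg_sub] at hmem⟩
  · rintro ⟨rfl, hp⟩
    exact funext (nuL_sub_sub_eq_of_sub_mem_HL ξ hL.nonempty hp)
  · have hK := eq_of_forall_nuL_eq_add hfacet Finset.univ_nonempty hL.nonempty
      (forall_nuL_eq_add_of_eq ξ h)
    exact not_isDualFace_univ hpos (hK ▸ hL)

/-- Writing `φ_{K,p}(u) = ν(p−u) − ν(p)` and, for a dual face `L`,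
`φ_{L,p}(u) = ν_L(p−u) − ν_L(p)`:
(a) `φ_{K,p} = φ_{K,p'}` iff `p = p'`;
(b) for dual faces `L, L'`, `φ_{L,p} = φ_{L',p'}` iff `L = L'` and `p − p' ∈ H_L`;
(c) `φ_{K,p} ≠ φ_{L,p'}` for every dual face `L` and all `p, p'`. -/
theorem horofunction_parametrization_injective
    {V : Type*} [NormedAddCommGroup V] [InnerProductSpace ℝ V] [FiniteDimensional ℝ V]
    {m : ℕ} (ξ : Fin (m + 1) → V →ₗ[ℝ] ℝ)
    (hfacet : ∀ k, ∃ u : V, ξ k u = 1 ∧ ∀ l, l ≠ k → ξ l u < 1)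
    (hpos : ∀ u : V, u ≠ 0 → 0 < nu ξ u) :
    (∀ p p' : V,
      ((fun u => nu ξ (p - u) - nu ξ p) = fun u => nu ξ (p' - u) - nu ξ p') ↔ p = p') ∧
    (∀ L L' : Finset (Fin (m + 1)), IsDualFace ξ L → IsDualFace ξ L' → ∀ p p' : V,
      ((fun u => nuL ξ L (p - u) - nuL ξ L p) =
          fun u => nuL ξ L' (p' - u) - nuL ξ L' p') ↔
        (L = L' ∧ p - p' ∈ HL ξ L)) ∧
    (∀ L : Finset (Fin (m + 1)), IsDualFace ξ L → ∀ p p' : V,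
      (fun u => nu ξ (p - u) - nu ξ p) ≠ fun u => nuL ξ L (p' - u) - nuL ξ L p') :=
  horofunction_parametrization_injective_general ξ hfacet hpos
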